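/- For every continuous function f : ℝ³ → ℂ that is ℤ³-periodic (f(x+k) = f(x) for all k ∈ ℤ³), one has lim_{ε→0⁺} ε^{3/2} ∫_{ℝ³} f(x) e^{−επ|x|²} dx = ∫_{[0,1]³} f(x) dx. -/

import Mathlib

open MeasureTheory Real Filter Function Set
open scoped ENNReal Topology RealInnerProductSpace FourierTransform

noncomputable section

abbrev V3 : Type := EuclideanSpace ℝ (Fin 3)
abbrev X3 : Type := Fin 3 → ℝ

/-- Japanese bracket `⟨v⟩ = (1+|v|²)^{1/2}`. -/
def jap (v : V3) : ℝ := Real.sqrt (1 + ‖v‖ ^ 2)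

/-- `⟨q⟩` for integer frequencies `q ∈ ℤ³`. -/
def japZ (m : Fin 3 → ℤ) : ℝ := Real.sqrt (1 + ∑ i, (m i : ℝ) ^ 2)

/-- Fundamental domain of the torus `T³`. -/
def cube : Set X3 := Set.Icc 0 1

/-- Surface measure on the unit sphere `S² ⊂ ℝ³`
(two–dimensional Hausdorff measure restricted to the sphere). -/
def sphMeas : Measure V3 :=
  (MeasureTheory.Measure.hausdorffMeasure 2 : Measure V3).restrict (Metric.sphere 0 1)

/-- Post-collisional velocity `v' = (v+v_*)/2 + (|v-v_*|/2)σ`. -/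
def vPost (v vs σ : V3) : V3 := (2 : ℝ)⁻¹ • (v + vs) + (‖v - vs‖ / 2) • σ

/-- Post-collisional velocity `v'_* = (v+v_*)/2 − (|v-v_*|/2)σ`. -/
def vsPost (v vs σ : V3) : V3 := (2 : ℝ)⁻¹ • (v + vs) - (‖v - vs‖ / 2) • σ

/-- Boltzmann collision kernel `B(u,σ) = |u|^γ b((u/|u|)·σ)`. -/
def Bker (γ : ℝ) (b : ℝ → ℝ) (u σ : V3) : ℝ := ‖u‖ ^ γ * b ⟪‖u‖⁻¹ • u, σ⟫

/-- Assumptions on the non-cutoff angular kernel `b` with singularity exponent `1+2s`. -/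
structure AngularKernel (s : ℝ) (b : ℝ → ℝ) : Prop where
  nonneg : ∀ t, 0 ≤ b t
  vanish : ∀ t : ℝ, t < 0 → b t = 0
  bounds : ∃ C > (0 : ℝ), ∀ θ ∈ Set.Ioc (0 : ℝ) (π / 2),
    C * θ ^ (-1 - 2 * s) ≤ Real.sin θ * b (Real.cos θ) ∧
      Real.sin θ * b (Real.cos θ) ≤ C⁻¹ * θ ^ (-1 - 2 * s)

/-- Boltzmann collision operator `Q(g,f)`. -/
def Qop (γ : ℝ) (b : ℝ → ℝ) (g f : V3 → ℝ) (v : V3) : ℝ :=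
  ∫ vs, (∫ σ, Bker γ b (v - vs) σ *
    (g (vsPost v vs σ) * f (vPost v vs σ) - g vs * f v) ∂sphMeas)

/-- Cutoff collision operator `Q_ε(g,f)`, with the deviation angle `θ ≥ ε`. -/
def Qeps (γ : ℝ) (b : ℝ → ℝ) (ε : ℝ) (g f : V3 → ℝ) (v : V3) : ℝ :=
  ∫ vs, (∫ σ, (if ⟪‖v - vs‖⁻¹ • (v - vs), σ⟫ ≤ Real.cos ε then
    Bker γ b (v - vs) σ * (g (vsPost v vs σ) * f (vPost v vs σ) - g vs * f v)
    else 0) ∂sphMeas)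

/-- Weighted `L^p_l` norm `‖⟨·⟩^l f‖_{L^p}` (extended-real valued). -/
def wLp (p : ℝ≥0∞) (l : ℝ) (f : V3 → ℂ) : ℝ≥0∞ :=
  eLpNorm (fun v => jap v ^ l • f v) p volume

/-- Weighted Sobolev norm `‖f‖_{H^m_l} = ‖⟨D⟩^m (⟨·⟩^l f)‖_{L²}`, computed on the
Fourier side via Plancherel. -/
def sobN (m l : ℝ) (f : V3 → ℂ) : ℝ≥0∞ :=
  eLpNorm (fun ξ => jap ξ ^ m • 𝓕 (fun v => jap v ^ l • f v) ξ) 2 volume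

/-- Character `e^{2πi m·x}` on the torus. -/
def eX (m : Fin 3 → ℤ) (x : X3) : ℂ :=
  Complex.exp (((2 * π * ∑ i, (m i : ℝ) * x i : ℝ) : ℂ) * Complex.I)

/-- Fourier coefficient in the space variable: `F_x(f)(m,v) = ∫_{T³} e^{-2πim·x} f(x,v) dx`. -/
def Fx (f : X3 → V3 → ℂ) (m : Fin 3 → ℤ) : V3 → ℂ :=
  fun v => ∫ x in cube, (eX m x)⁻¹ * f x v

def toC (f : X3 → V3 → ℝ) : X3 → V3 → ℂ := fun x v => (f x v : ℂ)
def toC1 (f : V3 → ℝ) : V3 → ℂ := fun v => (f v : ℂ)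

/-- Squared mixed norm `‖f‖²_{H^n_x X} = Σ_q ⟨q⟩^{2n} ‖F_x(f)(q,·)‖²_X`. -/
def hxNSq (n : ℝ) (N : (V3 → ℂ) → ℝ≥0∞) (f : X3 → V3 → ℂ) : ℝ≥0∞ :=
  ∑' q : Fin 3 → ℤ, ENNReal.ofReal (japZ q ^ (2 * n)) * N (Fx f q) ^ 2

/-- Squared `H^n_x H^m_l` norm. -/
def hxSobSq (n m l : ℝ) (f : X3 → V3 → ℂ) : ℝ≥0∞ := hxNSq n (sobN m l) f

/-- Squared `H^n_x L²_l` norm. -/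
def hxL2Sq (n l : ℝ) (f : X3 → V3 → ℂ) : ℝ≥0∞ := hxNSq n (wLp 2 l) f

/-- `L^∞_x L²_l` norm. -/
def linfxL2 (l : ℝ) (f : X3 → V3 → ℝ) : ℝ≥0∞ :=
  essSup (fun x => wLp 2 l fun v => (f x v : ℂ)) volume

/-- A dyadic partition of unity `ψ, φ` on `ℝ³`, as used for the Littlewood–Paley
decompositions in phase and frequency space. -/
structure DyadicPartition (ψv φv : V3 → ℝ) : Prop where
  smooth_psi : ContDiff ℝ ((⊤ : ℕ∞) : WithTop ℕ∞) ψv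
  smooth_phi : ContDiff ℝ ((⊤ : ℕ∞) : WithTop ℕ∞) φv
  nonneg_psi : ∀ ξ, 0 ≤ ψv ξ
  nonneg_phi : ∀ ξ, 0 ≤ φv ξ
  radial_psi : ∀ ξ η : V3, ‖ξ‖ = ‖η‖ → ψv ξ = ψv η
  radial_phi : ∀ ξ η : V3, ‖ξ‖ = ‖η‖ → φv ξ = φv η
  supp_psi : ∀ ξ : V3, 4 / 3 < ‖ξ‖ → ψv ξ = 0
  supp_phi : ∀ ξ : V3, (‖ξ‖ < 3 / 4 ∨ 8 / 3 < ‖ξ‖) → φv ξ = 0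
  partition : ∀ ξ : V3, ψv ξ + ∑' j : ℕ, φv ((2 : ℝ) ^ (-(j : ℝ)) • ξ) = 1

/-- Phase-space localization `P_k f = φ(2^{-k}·) f`, `k ≥ 0`. -/
def Pdy (φv : V3 → ℝ) (k : ℕ) (f : V3 → ℂ) : V3 → ℂ :=
  fun v => (φv ((2 : ℝ) ^ (-(k : ℝ)) • v) : ℂ) * f v

/-- Frequency localization `F_j f = ℱ⁻¹(φ(2^{-j}·) ℱ f)`, `j ≥ 0`. -/
def Fdy (φv : V3 → ℝ) (j : ℕ) (f : V3 → ℂ) : V3 → ℂ :=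
  𝓕⁻ fun ξ => (φv ((2 : ℝ) ^ (-(j : ℝ)) • ξ) : ℂ) * 𝓕 f ξ

/-- Frequency localization indexed by `j ∈ ℤ`, `j ≥ -1`, where `j = -1` uses `ψ`. -/
def FdyZ (ψv φv : V3 → ℝ) (j : ℤ) (f : V3 → ℂ) : V3 → ℂ :=
  𝓕⁻ fun ξ => ((if j = -1 then ψv ξ else φv ((2 : ℝ) ^ (-(j : ℝ)) • ξ)) : ℂ) * 𝓕 f ξ

/-- The frequencies `m = (±⌊2^{(1-ε)j}⌋, 0, 0) ∈ M_j`. -/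
def mIdx (ε : ℝ) (j : ℕ) (sgn : Bool) : Fin 3 → ℤ :=
  fun i => if i = 0 then (if sgn then 1 else -1) * ⌊(2 : ℝ) ^ ((1 - ε) * j)⌋ else 0

/-- The divergent sum in the definition of `R_sd(ℓ;ε,a)` (and of `H^n_sd(ℓ;ε,a)`):
`Σ_{j≥1} Σ_{l>aj} 2^{(2ℓa+2n(1-ε)+ε)j} Σ_{m∈M_j} ‖F_j P_l F_x(f)(m,·)‖²_{L²}`. -/
def rsdSum (φv : V3 → ℝ) (ℓ ε a n : ℝ) (f : X3 → V3 → ℝ) : ℝ≥0∞ :=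
  ∑' j : ℕ, ∑' l : ℕ,
    if 1 ≤ j ∧ a * j < l then
      ENNReal.ofReal ((2 : ℝ) ^ ((2 * ℓ * a + 2 * n * (1 - ε) + ε) * j)) *
        (eLpNorm (Fdy φv j (Pdy φv l (Fx (toC f) (mIdx ε j true)))) 2 volume ^ 2 +
          eLpNorm (Fdy φv j (Pdy φv l (Fx (toC f) (mIdx ε j false)))) 2 volume ^ 2)
    else 0

/-- Membership in the set of typical rough and slowly decaying data `R_sd(ℓ; ε, a)`. -/
def memRsd (φv : V3 → ℝ) (ℓ ε a : ℝ) (f : X3 → V3 → ℝ) : Prop :=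
  (∀ x v, 0 ≤ f x v) ∧ Measurable (fun p : X3 × V3 => f p.1 p.2) ∧
    (∀ (k : Fin 3 → ℤ) (x : X3) (v : V3), f (x + fun i => (k i : ℝ)) v = f x v) ∧
    linfxL2 ℓ f < ⊤ ∧ rsdSum φv ℓ ε a 0 f = ⊤

/-- Membership in the set of regular-in-`x` slowly decaying data `H^n_sd(ℓ; ε, a)`. -/
def memHnsd (φv : V3 → ℝ) (ℓ ε a n : ℝ) (f : X3 → V3 → ℝ) : Prop :=
  (∀ x v, 0 ≤ f x v) ∧ Measurable (fun p : X3 × V3 => f p.1 p.2) ∧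
    (∀ (k : Fin 3 → ℤ) (x : X3) (v : V3), f (x + fun i => (k i : ℝ)) v = f x v) ∧
    hxL2Sq n ℓ (toC f) < ⊤ ∧ rsdSum φv ℓ ε a n f = ⊤

/-- Test functions for the weak formulation of the Boltzmann equation: `C¹_t C²_{x,v}`
(here `C²` in all variables), periodic in `x`, compactly supported in `[0,∞)×T³×ℝ³`. -/
structure TestFn (φ : ℝ → X3 → V3 → ℝ) : Prop where
  smooth : ContDiff ℝ 2 fun p : ℝ × X3 × V3 => φ p.1 p.2.1 p.2.2
  periodicX : ∀ (t : ℝ) (k : Fin 3 → ℤ) (x : X3) (v : V3),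
    φ t (x + fun i => (k i : ℝ)) v = φ t x v
  compactSupp : ∃ R : ℝ, ∀ t x v, (R ≤ t ∨ R ≤ ‖v‖) → φ t x v = 0

/-- Smooth test functions on `ℝ_t × T³ × ℝ³_v`, compactly supported in `(t,v)`. -/
structure TestXV (φ : ℝ → X3 → V3 → ℝ) : Prop where
  smooth : ContDiff ℝ ((⊤ : ℕ∞) : WithTop ℕ∞) fun p : ℝ × X3 × V3 => φ p.1 p.2.1 p.2.2
  periodicX : ∀ (t : ℝ) (k : Fin 3 → ℤ) (x : X3) (v : V3),
    φ t (x + fun i => (k i : ℝ)) v = φ t x v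
  compactSupp : ∃ R : ℝ, ∀ t x v, (R ≤ |t| ∨ R ≤ ‖v‖) → φ t x v = 0

/-- Smooth test functions with time support inside `I`. -/
structure TestXVIn (I : Set ℝ) (φ : ℝ → X3 → V3 → ℝ) : Prop where
  smooth : ContDiff ℝ ((⊤ : ℕ∞) : WithTop ℕ∞) fun p : ℝ × X3 × V3 => φ p.1 p.2.1 p.2.2
  periodicX : ∀ (t : ℝ) (k : Fin 3 → ℤ) (x : X3) (v : V3),
    φ t (x + fun i => (k i : ℝ)) v = φ t x v
  suppT : ∀ t ∉ I, ∀ x v, φ t x v = 0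
  compactSupp : ∃ R : ℝ, ∀ t x v, (R ≤ |t| ∨ R ≤ ‖v‖) → φ t x v = 0

/-- Smooth test functions on `T³ × ℝ³_v`, compactly supported in `v`. -/
structure TestXV0 (φ : X3 → V3 → ℝ) : Prop where
  smooth : ContDiff ℝ ((⊤ : ℕ∞) : WithTop ℕ∞) fun p : X3 × V3 => φ p.1 p.2
  periodicX : ∀ (k : Fin 3 → ℤ) (x : X3) (v : V3), φ (x + fun i => (k i : ℝ)) v = φ x v
  compactV : ∃ R : ℝ, ∀ x v, R ≤ ‖v‖ → φ x v = 0

def ddt (φ : ℝ → X3 → V3 → ℝ) (t : ℝ) (x : X3) (v : V3) : ℝ :=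
  deriv (fun τ => φ τ x v) t

def vGradX (φ : ℝ → X3 → V3 → ℝ) (t : ℝ) (x : X3) (v : V3) : ℝ :=
  fderiv ℝ (fun y => φ t y v) x fun i => v i

/-- Entropy `H(f) = ∫∫ f log f`. -/
def Hfun (f : X3 → V3 → ℝ) : ℝ := ∫ x in cube, ∫ v, f x v * Real.log (f x v)

/-- Entropy dissipation functional `D(f)`. -/
def entDiss (γ : ℝ) (b : ℝ → ℝ) (f : X3 → V3 → ℝ) : ℝ :=
  (4 : ℝ)⁻¹ * ∫ x in cube, ∫ v, ∫ vs, (∫ σ, Bker γ b (v - vs) σ *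
    (f x (vsPost v vs σ) * f x (vPost v vs σ) - f x vs * f x v) *
    Real.log (f x (vsPost v vs σ) * f x (vPost v vs σ) / (f x vs * f x v)) ∂sphMeas)

/-- Product measure on `T³ × ℝ³`. -/
def tvMeas : Measure (X3 × V3) := (volume.restrict cube).prod volume

/-- Product measure on `A × T³ × ℝ³` for a time set `A`. -/
def tcubeMeas (A : Set ℝ) : Measure (ℝ × X3 × V3) :=
  (volume.restrict A).prod ((volume.restrict cube).prod volume)

/-- Weak solution of the Boltzmann equation `∂_t f + v·∇_x f = Q(f,f)` on `[0,T]×T³×ℝ³`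
with initial datum `f₀`. -/
structure IsWeakSolution (γ : ℝ) (b : ℝ → ℝ) (T : ℝ)
    (f₀ : X3 → V3 → ℝ) (f : ℝ → X3 → V3 → ℝ) : Prop where
  init_nonneg : ∀ x v, 0 ≤ f₀ x v
  init_periodicX : ∀ (k : Fin 3 → ℤ) (x : X3) (v : V3), f₀ (x + fun i => (k i : ℝ)) v = f₀ x v
  init_mass : Integrable (fun p : X3 × V3 => f₀ p.1 p.2 * (1 + ‖p.2‖ ^ 2)) tvMeas
  init_entropy : Integrable (fun p : X3 × V3 => f₀ p.1 p.2 * Real.log (f₀ p.1 p.2)) tvMeas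
  nonneg : ∀ t x v, 0 ≤ f t x v
  meas : Measurable fun p : ℝ × X3 × V3 => f p.1 p.2.1 p.2.2
  periodicX : ∀ (t : ℝ) (k : Fin 3 → ℤ) (x : X3) (v : V3),
    f t (x + fun i => (k i : ℝ)) v = f t x v
  bddL1 : ∃ C : ℝ, ∀ᵐ t ∂volume.restrict (Set.Icc 0 T),
    (∫ x in cube, ∫ v, f t x v * (1 + ‖v‖ ^ 2)) ≤ C ∧
      (∫ x in cube, ∫ v, f t x v * |Real.log (f t x v)|) ≤ C
  massCons : ∀ t ∈ Set.Icc 0 T,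
    (∫ x in cube, ∫ v, f t x v) = ∫ x in cube, ∫ v, f₀ x v
  momCons : ∀ t ∈ Set.Icc 0 T,
    (∫ x in cube, ∫ v, f t x v • v : V3) = ∫ x in cube, ∫ v, f₀ x v • v
  energyCons : ∀ t ∈ Set.Icc 0 T,
    (∫ x in cube, ∫ v, f t x v * ‖v‖ ^ 2) = ∫ x in cube, ∫ v, f₀ x v * ‖v‖ ^ 2
  entropyIneq : ∀ T' ∈ Set.Ioc 0 T,
    Hfun (f T') + (∫ t in Set.Icc 0 T', entDiss γ b (f t)) ≤ Hfun f₀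
  weakForm : ∀ φ : ℝ → X3 → V3 → ℝ, TestFn φ → ∀ T' ∈ Set.Icc 0 T,
    Tendsto (fun ε : ℝ => ∫ t in Set.Icc 0 T', ∫ x in cube, ∫ v,
        Qeps γ b ε (f t x) (f t x) v * φ t x v) (𝓝[>] 0)
      (𝓝 ((∫ x in cube, ∫ v, f T' x v * φ T' x v) -
          (∫ x in cube, ∫ v, f₀ x v * φ 0 x v) -
          (∫ t in Set.Icc 0 T', ∫ x in cube, ∫ v, f t x v * ddt φ t x v) -
          (∫ t in Set.Icc 0 T', ∫ x in cube, ∫ v, f t x v * vGradX φ t x v)))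

/-- Iterated partial derivative `∂^α_x` in the space variable. -/
def pdX (i : Fin 3) (g : X3 → ℝ) : X3 → ℝ := fun x => fderiv ℝ g x (Pi.single i 1)

def pdMX (α : Fin 3 → ℕ) (g : X3 → ℝ) : X3 → ℝ :=
  (pdX 0)^[α 0] ((pdX 1)^[α 1] ((pdX 2)^[α 2] g))

/-- Iterated partial derivative `∂^α_v` in the velocity variable. -/
def pdV (i : Fin 3) (g : V3 → ℝ) : V3 → ℝ :=
  fun v => fderiv ℝ g v (EuclideanSpace.single i 1)

def pdMV (α : Fin 3 → ℕ) (g : V3 → ℝ) : V3 → ℝ :=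
  (pdV 0)^[α 0] ((pdV 1)^[α 1] ((pdV 2)^[α 2] g))

/-- Order `|α|` of a multi-index. -/
def mOrder (α : Fin 3 → ℕ) : ℕ := α 0 + α 1 + α 2

/-- `g` is the weak derivative `∂^α_x u` on `T³×ℝ³` (against smooth test functions). -/
def HasWeakDerivX (α : Fin 3 → ℕ) (u g : X3 → V3 → ℝ) : Prop :=
  Measurable (fun p : X3 × V3 => g p.1 p.2) ∧
  ∀ φ : X3 → V3 → ℝ, TestXV0 φ →
    Integrable (fun p : X3 × V3 => g p.1 p.2 * φ p.1 p.2) tvMeas ∧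
    (∫ x in cube, ∫ v, u x v * pdMX α (fun y => φ y v) x) =
      (-1 : ℝ) ^ mOrder α * ∫ x in cube, ∫ v, g x v * φ x v

/-- `g` is the weak derivative `∂^α_v u` on `T³×ℝ³` (against smooth test functions). -/
def HasWeakDerivV (α : Fin 3 → ℕ) (u g : X3 → V3 → ℝ) : Prop :=
  Measurable (fun p : X3 × V3 => g p.1 p.2) ∧
  ∀ φ : X3 → V3 → ℝ, TestXV0 φ →
    Integrable (fun p : X3 × V3 => g p.1 p.2 * φ p.1 p.2) tvMeas ∧
    (∫ x in cube, ∫ v, u x v * pdMV α (φ x) v) =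
      (-1 : ℝ) ^ mOrder α * ∫ x in cube, ∫ v, g x v * φ x v

/-- Weighted `L¹_x L¹_w` norm `∫∫ |g| ⟨v⟩^w`. -/
def wL1 (w : ℝ) (g : X3 → V3 → ℝ) : ℝ≥0∞ :=
  ∫⁻ x in cube, ∫⁻ v, ENNReal.ofReal (|g x v| * jap v ^ w)

/-- `⟨D_x⟩^a`, defined through the Fourier series in `x`. -/
def DxPowX (a : ℝ) (g : X3 → ℂ) : X3 → ℂ :=
  fun x => ∑' m : Fin 3 → ℤ, (japZ m ^ a : ℝ) • ((∫ y in cube, (eX m y)⁻¹ * g y) * eX m x)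

/-- `⟨D_v⟩^r`, defined through the Fourier transform in `v`. -/
def DvPow (r : ℝ) (g : V3 → ℂ) : V3 → ℂ :=
  𝓕⁻ fun ξ => (jap ξ ^ r : ℝ) • 𝓕 g ξ

/-- The normalized Gaussian `μ(v) = e^{-|v|²/2}/(2π)^{3/2}`. -/
def stdGauss (v : V3) : ℝ := Real.exp (-‖v‖ ^ 2 / 2) / (2 * π) ^ ((3 : ℝ) / 2)


/-- Smooth compactly supported test functions on `ℝ³_v`. -/
structure TestV (φ : V3 → ℝ) : Prop where
  smooth : ContDiff ℝ ((⊤ : ℕ∞) : WithTop ℕ∞) φ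
  compactV : ∃ R : ℝ, ∀ v, R ≤ ‖v‖ → φ v = 0

/-- `g` is the weak derivative `∂^α_v u` on `ℝ³` (spatially homogeneous setting). -/
def HasWeakDerivV1 (α : Fin 3 → ℕ) (u g : V3 → ℝ) : Prop :=
  Measurable g ∧ ∀ φ : V3 → ℝ, TestV φ →
    Integrable (fun v => g v * φ v) ∧
    (∫ v, u v * pdMV α φ v) = (-1 : ℝ) ^ mOrder α * ∫ v, g v * φ v

/-- Strong solution (in the distributional sense, with the collision term interpreted
through the cutoff limit) of the Boltzmann equation on `(0,T)×T³×ℝ³`, together with the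
macroscopic bounds `m₀ ≤ ρ ≤ M₀`, `E ≤ E₀`, `H ≤ H₀`. -/
structure StrongSol (γ : ℝ) (b : ℝ → ℝ) (T : ℝ) (f : ℝ → X3 → V3 → ℝ)
    (m₀ M₀ E₀ H₀ : ℝ) : Prop where
  nonneg : ∀ t x v, 0 ≤ f t x v
  meas : Measurable fun p : ℝ × X3 × V3 => f p.1 p.2.1 p.2.2
  periodicX : ∀ (t : ℝ) (k : Fin 3 → ℤ) (x : X3) (v : V3),
    f t (x + fun i => (k i : ℝ)) v = f t x v
  pde : ∀ φ : ℝ → X3 → V3 → ℝ, TestXVIn (Set.Ioo 0 T) φ →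
    Tendsto (fun ε : ℝ => ∫ t in Set.Ioo 0 T, ∫ x in cube, ∫ v,
        Qeps γ b ε (f t x) (f t x) v * φ t x v) (𝓝[>] 0)
      (𝓝 (-(∫ t in Set.Ioo 0 T, ∫ x in cube, ∫ v,
        f t x v * (ddt φ t x v + vGradX φ t x v))))
  massLB : ∀ t ∈ Set.Ioo (0 : ℝ) T, ∀ x, m₀ ≤ ∫ v, f t x v
  massUB : ∀ t ∈ Set.Ioo (0 : ℝ) T, ∀ x, (∫ v, f t x v) ≤ M₀
  energyUB : ∀ t ∈ Set.Ioo (0 : ℝ) T, ∀ x, (∫ v, f t x v * ‖v‖ ^ 2) ≤ E₀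
  entropyUB : ∀ t ∈ Set.Ioo (0 : ℝ) T, ∀ x, (∫ v, f t x v * Real.log (f t x v)) ≤ H₀

/-- Solution (in the distributional sense, with the collision terms interpreted through
the cutoff limit) of the linear Boltzmann equation `∂_t h + v·∇_x h = Q(μ,h) + Q(h,μ)`. -/
structure LinearSol (γ : ℝ) (b : ℝ → ℝ) (T : ℝ) (h : ℝ → X3 → V3 → ℝ) : Prop where
  meas : Measurable fun p : ℝ × X3 × V3 => h p.1 p.2.1 p.2.2
  periodicX : ∀ (t : ℝ) (k : Fin 3 → ℤ) (x : X3) (v : V3),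
    h t (x + fun i => (k i : ℝ)) v = h t x v
  pde : ∀ φ : ℝ → X3 → V3 → ℝ, TestXVIn (Set.Ioo 0 T) φ →
    Tendsto (fun ε : ℝ => ∫ t in Set.Ioo 0 T, ∫ x in cube, ∫ v,
        (Qeps γ b ε stdGauss (h t x) v + Qeps γ b ε (h t x) stdGauss v) * φ t x v)
      (𝓝[>] 0)
      (𝓝 (-(∫ t in Set.Ioo 0 T, ∫ x in cube, ∫ v,
        h t x v * (ddt φ t x v + vGradX φ t x v))))

/-- Cutoff pairing `⟨Q_ε(g,h), f⟩` for complex-valued functions. -/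
def QpairEps (γ : ℝ) (b : ℝ → ℝ) (ε : ℝ) (g h f : V3 → ℂ) : ℂ :=
  ∫ v, ∫ vs, (∫ σ, (if ⟪‖v - vs‖⁻¹ • (v - vs), σ⟫ ≤ Real.cos ε then
      (Bker γ b (v - vs) σ : ℂ) * (g (vsPost v vs σ) * h (vPost v vs σ) - g vs * h v) * f v
    else 0) ∂sphMeas)

/-- Embedding of integer frequencies into `ℝ³`. -/
def mV (m : Fin 3 → ℤ) : V3 := (WithLp.equiv 2 (Fin 3 → ℝ)).symm fun i => (m i : ℝ)

/-- Fourier transform on `ℝ³ × ℝ³`. -/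
def FT6 (g : V3 → V3 → ℂ) (m ξ : V3) : ℂ :=
  ∫ x : V3, ∫ v : V3,
    Complex.exp (((-(2 * π * (⟪x, m⟫ + ⟪v, ξ⟫)) : ℝ) : ℂ) * Complex.I) * g x v

/-- The Fourier multiplier operator `T_M` on `ℝ³ × ℝ³` with symbol `M`. -/
def TMop (M : V3 → V3 → ℂ) (g : V3 → V3 → ℂ) (x v : V3) : ℂ :=
  ∫ m : V3, ∫ ξ : V3,
    Complex.exp (((2 * π * (⟪x, m⟫ + ⟪v, ξ⟫) : ℝ) : ℂ) * Complex.I) * (M m ξ * FT6 g m ξ)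

/-- Mixed Fourier transform on `T³ × ℝ³`. -/
def FTmix (f : X3 → V3 → ℂ) (m : Fin 3 → ℤ) (ξ : V3) : ℂ :=
  ∫ x in cube, ∫ v : V3,
    (eX m x)⁻¹ * (Complex.exp (((-(2 * π * ⟪v, ξ⟫) : ℝ) : ℂ) * Complex.I) * f x v)

/-- The multiplier operator `S_M` on `T³ × ℝ³` with symbol `M(m,ξ)`, `m ∈ ℤ³`. -/
def SMop (M : V3 → V3 → ℂ) (f : X3 → V3 → ℂ) (x : X3) (v : V3) : ℂ :=
  ∑' m : Fin 3 → ℤ, eX m x *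
    ∫ ξ : V3, Complex.exp (((2 * π * ⟪v, ξ⟫ : ℝ) : ℂ) * Complex.I) * (M (mV m) ξ * FTmix f m ξ)
/-! Push the Gaussian `ε^{3/2} e^{-επ|x|²} dx` forward to the torus `ℝ³/ℤ³`. Its integral against
the character `e^{2πi n·x}` is the Gaussian's Fourier transform `e^{-π|n|²/ε}`, which tends to `1`
for `n = 0` and to `0` otherwise, that is, to the integral of the character over the unit cube.
Integration against a probability measure is a functional of norm one on `C(T³)` and
trigonometric polynomials are dense there (Stone–Weierstrass), so the convergence extends to every
continuous function on the torus, in particular to the one induced by the periodic `f`. -/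

section DenseSpan

variable {X : Type*} [TopologicalSpace X] [CompactSpace X] [MeasurableSpace X]
  [OpensMeasurableSpace X] {𝕜 : Type*} [RCLike 𝕜]

theorem ContinuousMap.integrable (μ : Measure X) [IsFiniteMeasure μ] (F : C(X, 𝕜)) :
    Integrable F μ :=
  (BoundedContinuousFunction.mkOfCompact F).integrable μ

theorem lipschitzWith_integral_continuousMap (μ : Measure X) [IsProbabilityMeasure μ] :
    LipschitzWith 1 fun F : C(X, 𝕜) ↦ ∫ x, F x ∂μ := by
  refine LipschitzWith.of_dist_le_mul fun F G ↦ ?_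
  rw [NNReal.coe_one, one_mul, dist_eq_norm, dist_eq_norm,
    ← integral_sub (F.integrable μ) (G.integrable μ), ← BoundedContinuousFunction.norm_mkOfCompact]
  exact (BoundedContinuousFunction.mkOfCompact (F - G)).norm_integral_le_norm μ

theorem tendsto_integral_of_dense_span {α : Type*} {l : Filter α} {μ : α → Measure X}
    (hμ : ∀ᶠ a in l, IsProbabilityMeasure (μ a)) {ν : Measure X} [IsProbabilityMeasure ν]
    {s : Set C(X, 𝕜)} (hs : (Submodule.span 𝕜 s).topologicalClosure = ⊤)
    (h : ∀ g ∈ s, Tendsto (fun a ↦ ∫ x, g x ∂μ a) l (𝓝 (∫ x, g x ∂ν))) (F : C(X, 𝕜)) :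
    Tendsto (fun a ↦ ∫ x, F x ∂μ a) l (𝓝 (∫ x, F x ∂ν)) := by
  classical
  let μ' a : Measure X := if IsProbabilityMeasure (μ a) then μ a else ν
  have : ∀ a, IsProbabilityMeasure (μ' a) := fun a ↦ by
    unfold μ'
    split_ifs with ha
    exacts [ha, inferInstance]
  have hμμ' (G : C(X, 𝕜)) : (fun a ↦ ∫ x, G x ∂μ' a) =ᶠ[l] fun a ↦ ∫ x, G x ∂μ a :=
    hμ.mono fun a ha ↦ by simp only [μ', if_pos ha]
  let S : Submodule 𝕜 C(X, 𝕜) :=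
    { carrier := {G | Tendsto (fun a ↦ ∫ x, G x ∂μ' a) l (𝓝 (∫ x, G x ∂ν))}
      add_mem' := fun {G H} hG hH ↦ by
        simpa only [Set.mem_ofPred_eq, ContinuousMap.add_apply,
          integral_add (G.integrable _) (H.integrable _)] using hG.add hH
      zero_mem' := by simpa using tendsto_const_nhds
      smul_mem' := fun c G hG ↦ by
        simpa only [Set.mem_ofPred_eq, ContinuousMap.smul_apply, integral_smul]
          using hG.const_smul c }
  have hS : IsClosed (S : Set C(X, 𝕜)) :=
    (LipschitzWith.uniformEquicontinuous _ 1 fun a ↦ lipschitzWith_integral_continuousMap (μ' a)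
      ).equicontinuous.isClosed_setOfPred_tendsto
      (lipschitzWith_integral_continuousMap ν).continuous
  have hspan : Submodule.span 𝕜 s ≤ S :=
    Submodule.span_le.mpr fun g hg ↦ (h g hg).congr' (hμμ' g).symm
  have hF : F ∈ S := (hs ▸ Submodule.topologicalClosure_minimal _ hspan hS) Submodule.mem_top
  exact hF.congr' (hμμ' F)

end DenseSpan

theorem integral_fourier_Icc (k : ℤ) :
    ∫ t in Icc (0 : ℝ) 1, fourier k (t : UnitAddCircle) = if k = 0 then 1 else 0 := by
  have h := fourierCoeff_eq_intervalIntegral (T := 1) (fourier k) 0 0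
  rw [fourierCoeff_fourier, Pi.single_apply, zero_add, intervalIntegral.integral_of_le zero_le_one,
    ← integral_Icc_eq_integral_Ioc] at h
  simpa [fourier_zero, eq_comm] using h.symm

namespace UnitAddTorus

variable {ι : Type*}

def mk : C(ι → ℝ, UnitAddTorus ι) :=
  ⟨fun x i ↦ (x i : UnitAddCircle),
    continuous_pi fun i ↦ continuous_quotient_mk'.comp (continuous_apply i)⟩

theorem isQuotientMap_mk : Topology.IsQuotientMap (mk : C(ι → ℝ, UnitAddTorus ι)) :=
  (IsOpenQuotientMap.piMap fun _ ↦ QuotientAddGroup.isOpenQuotientMap_mk).isQuotientMap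

theorem exists_eq_add_of_mk_eq {x y : ι → ℝ} (h : mk x = mk y) :
    ∃ k : ι → ℤ, x = y + fun i ↦ (k i : ℝ) := by
  have (i : ι) : ∃ k : ℤ, k • (1 : ℝ) = x i - y i := by
    rw [← AddCircle.coe_eq_zero_iff, AddCircle.coe_sub, sub_eq_zero]
    exact congr_fun h i
  choose k hk using this
  exact ⟨k, funext fun i ↦ eq_add_of_sub_eq' (by simpa using (hk i).symm)⟩

theorem exists_continuousMap_comp_mk {E : Type*} [TopologicalSpace E] {f : (ι → ℝ) → E}
    (hf : Continuous f) (hper : ∀ (k : ι → ℤ) (x : ι → ℝ), f (x + fun i ↦ (k i : ℝ)) = f x) :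
    ∃ F : C(UnitAddTorus ι, E), ∀ x, F (mk x) = f x := by
  have hfac : FactorsThrough f mk := fun x y hxy ↦ by
    obtain ⟨k, rfl⟩ := exists_eq_add_of_mk_eq hxy
    exact hper k y
  exact ⟨isQuotientMap_mk.lift ⟨f, hf⟩ hfac,
    DFunLike.congr_fun (isQuotientMap_mk.lift_comp (f := (mk : C(ι → ℝ, _))) ⟨f, hf⟩ hfac)⟩

variable [Fintype ι]

theorem measurable_mk : Measurable (mk : C(ι → ℝ, UnitAddTorus ι)) :=
  mk.continuous.measurable

theorem mFourier_mk (n : ι → ℤ) (x : ι → ℝ) :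
    mFourier n (mk x) = Complex.exp (∑ i, 2 * π * Complex.I * n i * x i) := by
  simp [mFourier, mk, Complex.exp_sum]

theorem integral_mFourier_mk_Icc (n : ι → ℤ) :
    ∫ x in Icc 0 1, mFourier n (mk x) = if n = 0 then 1 else 0 := by
  rw [← Set.pi_univ_Icc, volume_pi, Measure.restrict_pi_pi]
  simp only [mFourier, mk, ContinuousMap.coe_mk]
  rw [integral_fintype_prod_eq_prod (fun i (t : ℝ) ↦ fourier (n i) (t : UnitAddCircle))]
  simp only [Pi.zero_apply, Pi.one_apply, integral_fourier_Icc]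
  simp [Finset.prod_boole, funext_iff]

end UnitAddTorus

open UnitAddTorus

variable {ι : Type*} [Fintype ι]

def gaussianPi (ε : ℝ) : Measure (ι → ℝ) :=
  volume.withDensity fun x ↦
    ENNReal.ofReal (ε ^ ((Fintype.card ι : ℝ) / 2) * rexp (-(ε * π * ∑ i, x i ^ 2)))

theorem integral_gaussianPi {E : Type*} [NormedAddCommGroup E] [NormedSpace ℝ E] {ε : ℝ}
    (hε : 0 ≤ ε) (g : (ι → ℝ) → E) :
    ∫ x, g x ∂gaussianPi ε =
      (ε ^ ((Fintype.card ι : ℝ) / 2)) • ∫ x, rexp (-(ε * π * ∑ i, x i ^ 2)) • g x := by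
  have hmeas : Measurable fun x : ι → ℝ ↦
      (ε ^ ((Fintype.card ι : ℝ) / 2) * rexp (-(ε * π * ∑ i, x i ^ 2))).toNNReal := by
    fun_prop
  rw [gaussianPi, ← integral_smul]
  refine (integral_withDensity_eq_integral_smul hmeas g).trans (integral_congr_ae ?_)
  refine .of_forall fun x ↦ ?_
  dsimp only
  rw [NNReal.smul_def, Real.coe_toNNReal _ (by positivity), smul_smul]

theorem integral_mFourier_mk_gaussianPi {ε : ℝ} (hε : 0 < ε) (n : ι → ℤ) :
    ∫ x, mFourier n (mk x) ∂gaussianPi ε = rexp (-(π * ∑ i, (n i : ℝ) ^ 2) / ε) := by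
  have hb : 0 < ((ε * π : ℝ) : ℂ).re := by simpa using mul_pos hε pi_pos
  have h := GaussianFourier.integral_cexp_neg_mul_sum_add hb (fun i ↦ 2 * π * Complex.I * n i)
  rw [integral_gaussianPi hε.le]
  have hexp (x : ι → ℝ) : rexp (-(ε * π * ∑ i, x i ^ 2)) •
      Complex.exp (∑ i, 2 * π * Complex.I * n i * x i) =
      Complex.exp
        (-((ε * π : ℝ) : ℂ) * ∑ i, (x i : ℂ) ^ 2 + ∑ i, 2 * π * Complex.I * n i * x i) := by
    rw [Complex.real_smul, Complex.ofReal_exp, ← Complex.exp_add]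
    push_cast
    ring_nf
  have hpow : ((π : ℂ) / ((ε * π : ℝ) : ℂ)) ^ ((Fintype.card ι : ℂ) / 2) =
      ((ε ^ ((Fintype.card ι : ℝ) / 2))⁻¹ : ℝ) := by
    rw [← Real.inv_rpow hε.le, Complex.ofReal_cpow (by positivity)]
    push_cast
    congr 1
    field_simp
  have hsum : (∑ i, (2 * π * Complex.I * n i) ^ 2) / (4 * ((ε * π : ℝ) : ℂ)) =
      ((-(π * ∑ i, (n i : ℝ) ^ 2) / ε : ℝ) : ℂ) := by
    simp only [mul_pow, Complex.I_sq]
    push_cast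
    rw [Finset.mul_sum, ← Finset.sum_neg_distrib, Finset.sum_div, Finset.sum_div]
    refine Finset.sum_congr rfl fun i _ ↦ ?_
    field_simp
    ring
  simp_rw [mFourier_mk, hexp]
  rw [h, hpow, hsum, ← Complex.ofReal_exp, Complex.real_smul, ← mul_assoc, ← Complex.ofReal_mul,
    mul_inv_cancel₀ (by positivity), Complex.ofReal_one, one_mul]

theorem isProbabilityMeasure_gaussianPi {ε : ℝ} (hε : 0 < ε) :
    IsProbabilityMeasure (gaussianPi (ι := ι) ε) := by
  have h : (gaussianPi (ι := ι) ε).real univ = 1 := by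
    simpa [mFourier_zero] using integral_mFourier_mk_gaussianPi (ι := ι) hε 0
  exact ⟨(ENNReal.toReal_eq_one_iff _).mp h⟩

theorem tendsto_integral_mFourier_mk_gaussianPi (n : ι → ℤ) :
    Tendsto (fun ε ↦ ∫ x, mFourier n (mk x) ∂gaussianPi ε) (𝓝[>] 0)
      (𝓝 (if n = 0 then 1 else 0)) := by
  refine Tendsto.congr' (eventually_nhdsWithin_of_forall fun ε hε ↦
    (integral_mFourier_mk_gaussianPi hε n).symm) ?_
  split_ifs with hn
  · simp [hn]
  · obtain ⟨i, hi⟩ := Function.ne_iff.mp hn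
    have hi' : (n i : ℝ) ≠ 0 := by exact_mod_cast hi
    have hpos : 0 < π * ∑ i, (n i : ℝ) ^ 2 :=
      mul_pos pi_pos <| Finset.sum_pos' (fun _ _ ↦ sq_nonneg _) ⟨i, Finset.mem_univ _, by positivity⟩
    have h := tendsto_exp_neg_atTop_nhds_zero.comp (tendsto_inv_nhdsGT_zero.const_mul_atTop hpos)
    have h' := (Complex.continuous_ofReal.tendsto 0).comp h
    rw [Complex.ofReal_zero] at h'
    exact h'.congr fun ε ↦ by simp only [Function.comp_apply, div_eq_mul_inv, neg_mul]

theorem tendsto_integral_gaussianPi_mk (F : C(UnitAddTorus ι, ℂ)) :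
    Tendsto (fun ε ↦ ∫ x, F (mk x) ∂gaussianPi ε) (𝓝[>] 0) (𝓝 (∫ x in Icc 0 1, F (mk x))) := by
  have hmap (μ : Measure (ι → ℝ)) (G : C(UnitAddTorus ι, ℂ)) :
      ∫ x, G (mk x) ∂μ = ∫ y, G y ∂μ.map UnitAddTorus.mk :=
    (integral_map measurable_mk.aemeasurable G.continuous.aestronglyMeasurable).symm
  have : IsProbabilityMeasure (volume.restrict (Icc (0 : ι → ℝ) 1)) :=
    ⟨by simp [Real.volume_Icc_pi]⟩
  have := Measure.isProbabilityMeasure_map (μ := volume.restrict (Icc (0 : ι → ℝ) 1))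
    measurable_mk.aemeasurable
  simp only [hmap]
  refine tendsto_integral_of_dense_span ?_ span_mFourier_closure_eq_top ?_ F
  · filter_upwards [self_mem_nhdsWithin] with ε hε
    have := isProbabilityMeasure_gaussianPi (ι := ι) hε
    exact Measure.isProbabilityMeasure_map measurable_mk.aemeasurable
  · rintro _ ⟨n, rfl⟩
    simp only [← hmap, integral_mFourier_mk_Icc]
    exact tendsto_integral_mFourier_mk_gaussianPi n

/-- equation (2.7): Gaussian sampling of periodic functions,
`lim_{ε→0⁺} ε^{3/2} ∫_{ℝ³} f(x) e^{-επ|x|²} dx = ∫_{T³} f`. -/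
theorem statement14 (f : X3 → ℂ) (hf : Continuous f)
    (hper : ∀ (k : Fin 3 → ℤ) (x : X3), f (x + fun i => (k i : ℝ)) = f x) :
    Tendsto (fun ε : ℝ => (ε ^ ((3 : ℝ) / 2)) •
        ∫ x : X3, Real.exp (-(ε * π * ∑ i, x i ^ 2)) • f x)
      (𝓝[>] (0 : ℝ)) (𝓝 (∫ x in cube, f x)) := by
  obtain ⟨F, hF⟩ := exists_continuousMap_comp_mk hf hper
  have h := tendsto_integral_gaussianPi_mk F
  simp only [hF] at h
  refine h.congr' (eventually_nhdsWithin_of_forall fun ε hε ↦ ?_)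
  rw [integral_gaussianPi hε.le]
  norm_num
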